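/- arXiv:2503.03525 — 2 statements merged into one kernel-verified Lean document; each statement's English description precedes it below -/
import Mathlib

section
/- Let N ≥ 1 and let A ∈ ℝ^{N×N} satisfy: a_{ij} ≤ 0 for all i ≠ j, a_{ii} ≥ 0 for all i, and A is weakly diagonally dominant (Σ_{j≠i} |a_{ij}| ≤ |a_{ii}| for all i). Then for every δ ≥ 0 the matrix I + δA is invertible and ‖(I + δA)^{-1}‖_∞ ≤ 1, where ‖·‖_∞ denotes the operator norm induced by the maximum norm on ℝ^N. -/
open Matrix

/-- Operator norm of a matrix induced by the maximum norm on `ℝ^N`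
(the Pi norm on `Fin N → ℝ` is the sup norm `‖v‖ = max_i |v_i|`). -/
noncomputable def opNormInf {N : ℕ} (M : Matrix (Fin N) (Fin N) ℝ) : ℝ :=
  ‖(LinearMap.toContinuousLinearMap (Matrix.mulVecLin M) :
      (Fin N → ℝ) →L[ℝ] (Fin N → ℝ))‖

/-- If `A ∈ Z_N` (off-diagonal entries `≤ 0`), has nonnegative diagonal entries and is
weakly diagonally dominant, then for every `δ ≥ 0` the matrix `I + δA` is invertible and
`‖(I + δA)⁻¹‖_∞ ≤ 1`. -/
theorem stmt0 {N : ℕ} (hN : 1 ≤ N) (A : Matrix (Fin N) (Fin N) ℝ)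
    (hoff : ∀ i j, i ≠ j → A i j ≤ 0)
    (hdiag : ∀ i, 0 ≤ A i i)
    (hdd : ∀ i, ∑ j ∈ Finset.univ.erase i, |A i j| ≤ |A i i|) :
    ∀ δ : ℝ, 0 ≤ δ →
      IsUnit (1 + δ • A) ∧ opNormInf (1 + δ • A)⁻¹ ≤ 1 := by
  intro δ hδ
  have : NeZero N := ⟨by omega⟩
  set M : Matrix (Fin N) (Fin N) ℝ := 1 + δ • A with hM
  -- key estimate
  have key : ∀ w : Fin N → ℝ, ‖w‖ ≤ ‖M.mulVec w‖ := by
    intro w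
    obtain ⟨i, -, hi⟩ := Finset.exists_max_image Finset.univ (fun i => |w i|)
      ⟨(0 : Fin N), Finset.mem_univ _⟩
    have hwle : ‖w‖ ≤ |w i| := by
      apply pi_norm_le_iff_of_nonneg (abs_nonneg _) |>.2
      intro j; simpa using hi j (Finset.mem_univ j)
    -- compute the i-th coordinate of M.mulVec w
    have hv : M.mulVec w i = (1 + δ * A i i) * w i
        + ∑ j ∈ Finset.univ.erase i, δ * A i j * w j := by
      simp only [hM, Matrix.mulVec, dotProduct, Matrix.add_apply,
        Matrix.smul_apply, Matrix.one_apply, smul_eq_mul]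
      rw [← Finset.add_sum_erase _ _ (Finset.mem_univ i)]
      have hs : ∑ j ∈ Finset.univ.erase i, ((if i = j then (1:ℝ) else 0) + δ * A i j) * w j
          = ∑ j ∈ Finset.univ.erase i, δ * A i j * w j := by
        apply Finset.sum_congr rfl
        intro j hj
        rw [if_neg (Finset.ne_of_mem_erase hj).symm, zero_add]
      rw [hs, if_pos rfl]
    have hsum : |∑ j ∈ Finset.univ.erase i, δ * A i j * w j| ≤ δ * A i i * |w i| := by
      calc |∑ j ∈ Finset.univ.erase i, δ * A i j * w j|
          ≤ ∑ j ∈ Finset.univ.erase i, |δ * A i j * w j| := Finset.abs_sum_le_sum_abs _ _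
        _ ≤ ∑ j ∈ Finset.univ.erase i, δ * |A i j| * |w i| := by
            apply Finset.sum_le_sum
            intro j hj
            rw [abs_mul, abs_mul, abs_of_nonneg hδ]
            have h1 : |w j| ≤ |w i| := hi j (Finset.mem_univ j)
            have := mul_le_mul_of_nonneg_left h1 (mul_nonneg hδ (abs_nonneg (A i j)))
            linarith [this]
        _ = δ * |w i| * ∑ j ∈ Finset.univ.erase i, |A i j| := by
            rw [Finset.mul_sum]; apply Finset.sum_congr rfl; intro j _; ring
        _ ≤ δ * |w i| * |A i i| := by
            apply mul_le_mul_of_nonneg_left (hdd i)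
              (mul_nonneg hδ (abs_nonneg _))
        _ = δ * A i i * |w i| := by rw [abs_of_nonneg (hdiag i)]; ring
    have hlow : |w i| ≤ |M.mulVec w i| := by
      set x := (1 + δ * A i i) * w i
      set y := ∑ j ∈ Finset.univ.erase i, δ * A i j * w j
      have habs : |x| = (1 + δ * A i i) * |w i| := by
        rw [abs_mul, abs_of_nonneg (by nlinarith [hdiag i] : (0:ℝ) ≤ 1 + δ * A i i)]
      have htri : |x| ≤ |x + y| + |y| := by
        calc |x| = |(x + y) + (-y)| := by ring_nf
          _ ≤ |x + y| + |(-y)| := abs_add_le _ _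
          _ = |x + y| + |y| := by rw [abs_neg]
      rw [hv]
      have hda : 0 ≤ δ * A i i := mul_nonneg hδ (hdiag i)
      nlinarith [abs_nonneg (w i)]
    calc ‖w‖ ≤ |w i| := hwle
      _ ≤ |M.mulVec w i| := hlow
      _ ≤ ‖M.mulVec w‖ := by simpa using norm_le_pi_norm (M.mulVec w) i
  have hinj : Function.Injective (M.mulVec) := by
    intro a b hab
    have h0 : M.mulVec (a - b) = 0 := by
      rw [Matrix.mulVec_sub, hab, sub_self]
    have := key (a - b)
    rw [h0, norm_zero] at this
    have : a - b = 0 := norm_le_zero_iff.1 this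
    exact sub_eq_zero.1 this
  have hunit : IsUnit M := Matrix.mulVec_injective_iff_isUnit.1 hinj
  refine ⟨hunit, ?_⟩
  have hdet : IsUnit M.det := (Matrix.isUnit_iff_isUnit_det M).1 hunit
  apply ContinuousLinearMap.opNorm_le_bound _ zero_le_one
  intro v
  rw [one_mul]
  have hMv : M.mulVec (M⁻¹.mulVec v) = v := by
    rw [Matrix.mulVec_mulVec, Matrix.mul_nonsing_inv _ hdet, Matrix.one_mulVec]
  have := key (M⁻¹.mulVec v)
  rw [hMv] at this
  simpa using this
end

section
/- For every α ∈ [0,1] and every y ∈ (0,1], the inequality (1 − y/2)(1 − y)^α + (1 + y/2)(1 + y)^α − 2 ≤ α² y² holds. -/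
/-!
Let `g(y) = α²y² - ((1 - y/2)(1 - y)^α + (1 + y/2)(1 + y)^α - 2)`. Then `g(0) = g'(0) = 0`, so it
suffices that `g` is convex on `[0, 1]`. With `u(t) = (1 + t/2)(1 + t)^α` one has
`u''(t) = α(α + (1 + α)t/2)(1 + t)^(α - 2)` and `g''(t) = 2α² - u''(t) - u''(-t)`. If
`(1 + α)t/2 ≥ α` the sign of `g''` is clear; otherwise we bound `(1 ± t)^α` from above by the
cubic Taylor polynomial of `(1 + s)^α`, and what remains is a polynomial inequality. The Taylor
bound holds because the remainder has second derivative `α(1 - α)((1 + s)^(α - 2) - 1 - (α - 2)s)`,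
which is nonnegative by Bernoulli's inequality.
-/

open Real Set

theorem one_add_mul_le_rpow_one_add_of_nonpos {s q : ℝ} (hs : -1 < s) (hq : q ≤ 0) :
    1 + q * s ≤ (1 + s) ^ q := by
  have hpos : 0 < 1 + s := by linarith
  have hlog : log (1 + s) ≤ s := by linarith [log_le_sub_one_of_pos hpos]
  calc 1 + q * s ≤ log (1 + s) * q + 1 := by nlinarith
    _ ≤ exp (log (1 + s) * q) := add_one_le_exp _
    _ = (1 + s) ^ q := (rpow_def_of_pos hpos q).symm

theorem ConvexOn.add_mul_sub_le_of_hasDerivAt {D : Set ℝ} {f : ℝ → ℝ} {f' x y : ℝ}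
    (hf : ConvexOn ℝ D f) (hx : x ∈ D) (hy : y ∈ D) (hf' : HasDerivAt f f' x) :
    f x + f' * (y - x) ≤ f y := by
  rcases lt_trichotomy x y with hxy | rfl | hyx
  · have := hf.le_slope_of_hasDerivAt hx hy hxy hf'
    rw [slope_def_field, le_div_iff₀ (sub_pos.2 hxy)] at this
    linarith
  · simp
  · have := hf.slope_le_of_hasDerivAt hy hx hyx hf'
    rw [slope_def_field, div_le_iff₀ (sub_pos.2 hyx)] at this
    linarith

theorem hasDerivAt_one_add_rpow (p : ℝ) {t : ℝ} (ht : -1 < t) :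
    HasDerivAt (fun s => (1 + s) ^ p) (p * (1 + t) ^ (p - 1)) t :=
  (hasDerivAt_rpow_const (Or.inl (by linarith))).comp_const_add 1 t

theorem rpow_one_add_le_cubic {α s : ℝ} (hα0 : 0 ≤ α) (hα1 : α ≤ 1) (hs : -1 < s) :
    (1 + s) ^ α ≤ 1 + α * s - α * (1 - α) / 2 * s ^ 2 + α * (1 - α) * (2 - α) / 6 * s ^ 3 := by
  set h : ℝ → ℝ := fun t =>
    1 + α * t - α * (1 - α) / 2 * t ^ 2 + α * (1 - α) * (2 - α) / 6 * t ^ 3 - (1 + t) ^ α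
  set h' : ℝ → ℝ := fun t =>
    α - α * (1 - α) * t + α * (1 - α) * (2 - α) / 2 * t ^ 2 - α * (1 + t) ^ (α - 1)
  set h'' : ℝ → ℝ := fun t => α * (1 - α) * ((1 + t) ^ (α - 2) - (1 + (α - 2) * t))
  have hderiv : ∀ t ∈ Ioi (-1 : ℝ), HasDerivAt h (h' t) t := by
    intro t ht
    refine (((((hasDerivAt_id t).const_mul α).const_add 1).sub
      ((hasDerivAt_pow 2 t).const_mul (α * (1 - α) / 2))).add
      ((hasDerivAt_pow 3 t).const_mul (α * (1 - α) * (2 - α) / 6))).sub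
      (hasDerivAt_one_add_rpow α ht) |>.congr_deriv ?_
    push_cast
    ring
  have hderiv2 : ∀ t ∈ Ioi (-1 : ℝ), HasDerivAt h' (h'' t) t := by
    intro t ht
    refine ((((hasDerivAt_id t).const_mul (α * (1 - α))).const_sub α).add
      ((hasDerivAt_pow 2 t).const_mul (α * (1 - α) * (2 - α) / 2))).sub
      ((hasDerivAt_one_add_rpow (α - 1) ht).const_mul α) |>.congr_deriv ?_
    rw [show α - 1 - 1 = α - 2 by ring]
    push_cast
    ring
  have hconvex : ConvexOn ℝ (Ioi (-1)) h :=
    convexOn_of_hasDerivWithinAt2_nonneg (convex_Ioi _)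
      (fun t ht => (hderiv t ht).continuousAt.continuousWithinAt)
      (fun t ht => (hderiv t (interior_subset ht)).hasDerivWithinAt)
      (fun t ht => (hderiv2 t (interior_subset ht)).hasDerivWithinAt)
      fun t ht => mul_nonneg (mul_nonneg hα0 (by linarith)) (sub_nonneg.2
        (one_add_mul_le_rpow_one_add_of_nonpos (interior_subset ht : t ∈ Ioi (-1)) (by linarith)))
  have := hconvex.add_mul_sub_le_of_hasDerivAt (by norm_num) hs (hderiv 0 (by norm_num))
  simp [h, h'] at this
  linarith

theorem mul_rpow_one_sub_add_mul_rpow_one_add_le {α y : ℝ} (hα0 : 0 ≤ α) (hα1 : α ≤ 1)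
    (hy0 : 0 ≤ y) (hy1 : y < 1) :
    (α - (1 + α) * y / 2) * (1 - y) ^ (α - 2) + (α + (1 + α) * y / 2) * (1 + y) ^ (α - 2)
      ≤ 2 * α := by
  have hm : 0 < 1 - y := by linarith
  have hp : 0 < 1 + y := by linarith
  have ha : 0 ≤ (1 + α) * y / 2 := div_nonneg (mul_nonneg (by linarith) hy0) zero_le_two
  rcases le_or_gt α ((1 + α) * y / 2) with hsmall | hlarge
  · have hm_ge : 1 ≤ (1 - y) ^ (α - 2) :=
      one_le_rpow_of_pos_of_le_one_of_nonpos hm (by linarith) (by linarith)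
    have hp_le : (1 + y) ^ (α - 2) ≤ 1 := rpow_le_one_of_one_le_of_nonpos (by linarith) (by linarith)
    nlinarith
  have hsplit : ∀ x : ℝ, 0 < x → x ^ (α - 2) = x ^ α / x ^ 2 := fun x hx => by
    rw [rpow_sub hx, rpow_two]
  have hm_le := rpow_one_add_le_cubic hα0 hα1 (s := -y) (by linarith)
  have hp_le := rpow_one_add_le_cubic hα0 hα1 (s := y) (by linarith)
  rw [← sub_eq_add_neg] at hm_le
  have hm_mul := mul_le_mul_of_nonneg_left hm_le
    (mul_nonneg (by linarith : 0 ≤ α - (1 + α) * y / 2) (sq_nonneg (1 + y)))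
  have hp_mul := mul_le_mul_of_nonneg_left hp_le
    (mul_nonneg (by linarith : 0 ≤ α + (1 + α) * y / 2) (sq_nonneg (1 - y)))
  have hpoly : 0 ≤ y ^ 2 * (1 - α) * (2 - α)
      * ((1 - α) * (1 - α * y ^ 2 / 3) + α * (1 + α) * (y ^ 2 * (1 - y ^ 2)) / 6) := by
    have hy2 : y ^ 2 ≤ 1 := by nlinarith
    have hαy2 : α * y ^ 2 ≤ 1 := by nlinarith
    refine mul_nonneg (mul_nonneg (mul_nonneg (sq_nonneg y) (by linarith)) (by linarith))
      (add_nonneg (mul_nonneg (by linarith) (by linarith)) (div_nonneg ?_ (by norm_num)))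
    exact mul_nonneg (mul_nonneg hα0 (by linarith)) (mul_nonneg (sq_nonneg y) (by linarith))
  rw [hsplit _ hm, hsplit _ hp, mul_div_assoc', mul_div_assoc',
    div_add_div _ _ (by positivity) (by positivity), div_le_iff₀ (by positivity)]
  linear_combination hm_mul + hp_mul + hpoly

theorem hasDerivAt_one_add_half_mul_rpow (α : ℝ) {t : ℝ} (ht : -1 < t) :
    HasDerivAt (fun s => (1 + s / 2) * (1 + s) ^ α)
      ((1 + t) ^ α / 2 + α * (1 + t / 2) * (1 + t) ^ (α - 1)) t := by
  refine ((((hasDerivAt_id t).div_const 2).const_add 1).mul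
    (hasDerivAt_one_add_rpow α ht)).congr_deriv ?_
  simp only [id]
  ring

theorem hasDerivAt_deriv_one_add_half_mul_rpow (α : ℝ) {t : ℝ} (ht : -1 < t) :
    HasDerivAt (fun s => (1 + s) ^ α / 2 + α * (1 + s / 2) * (1 + s) ^ (α - 1))
      (α * (α + (1 + α) * t / 2) * (1 + t) ^ (α - 2)) t := by
  refine (((hasDerivAt_one_add_rpow α ht).div_const 2).add
    (((((hasDerivAt_id t).div_const 2).const_add 1).const_mul α).mul
      (hasDerivAt_one_add_rpow (α - 1) ht))).congr_deriv ?_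
  have hpos : 1 + t ≠ 0 := by linarith
  rw [show α - 1 - 1 = α - 2 by ring, show α - 1 = α - 2 + 1 by ring, rpow_add_one hpos]
  simp only [id]
  ring

noncomputable def gap (α t : ℝ) : ℝ :=
  α ^ 2 * t ^ 2 - ((1 - t / 2) * (1 - t) ^ α + (1 + t / 2) * (1 + t) ^ α - 2)

noncomputable def gapDeriv (α t : ℝ) : ℝ :=
  2 * α ^ 2 * t + ((1 - t) ^ α / 2 + α * (1 - t / 2) * (1 - t) ^ (α - 1))
    - ((1 + t) ^ α / 2 + α * (1 + t / 2) * (1 + t) ^ (α - 1))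

theorem hasDerivAt_gap (α : ℝ) {t : ℝ} (ht : t ∈ Ioo (-1 : ℝ) 1) :
    HasDerivAt (gap α) (gapDeriv α t) t := by
  have hminus := (hasDerivAt_one_add_half_mul_rpow α (t := -t) (by linarith [ht.2])).comp t
    (hasDerivAt_neg t)
  simp only [Function.comp_def, neg_div, ← sub_eq_add_neg] at hminus
  have hplus := hasDerivAt_one_add_half_mul_rpow α ht.1
  refine (((hasDerivAt_pow 2 t).const_mul (α ^ 2)).sub
    ((hminus.add hplus).sub_const 2)).congr_deriv ?_
  rw [gapDeriv]
  push_cast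
  ring

theorem hasDerivAt_gapDeriv (α : ℝ) {t : ℝ} (ht : t ∈ Ioo (-1 : ℝ) 1) :
    HasDerivAt (gapDeriv α)
      (α * (2 * α - (α - (1 + α) * t / 2) * (1 - t) ^ (α - 2)
        - (α + (1 + α) * t / 2) * (1 + t) ^ (α - 2))) t := by
  have hminus := (hasDerivAt_deriv_one_add_half_mul_rpow α (t := -t) (by linarith [ht.2])).comp t
    (hasDerivAt_neg t)
  simp only [Function.comp_def, neg_div, ← sub_eq_add_neg] at hminus
  have hplus := hasDerivAt_deriv_one_add_half_mul_rpow α ht.1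
  refine ((((hasDerivAt_id t).const_mul (2 * α ^ 2)).add hminus).sub hplus).congr_deriv ?_
  ring

theorem convexOn_gap {α : ℝ} (hα0 : 0 ≤ α) (hα1 : α ≤ 1) : ConvexOn ℝ (Icc 0 1) (gap α) := by
  have hmem : ∀ t ∈ interior (Icc (0 : ℝ) 1), t ∈ Ioo (-1 : ℝ) 1 := by
    rw [interior_Icc]
    exact fun t ht => ⟨by linarith [ht.1], ht.2⟩
  refine convexOn_of_hasDerivWithinAt2_nonneg (convex_Icc 0 1)
    (Continuous.continuousOn (by unfold gap; fun_prop (disch := exact Or.inr hα0)))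
    (fun t ht => (hasDerivAt_gap α (hmem t ht)).hasDerivWithinAt)
    (fun t ht => (hasDerivAt_gapDeriv α (hmem t ht)).hasDerivWithinAt) fun t ht => ?_
  rw [interior_Icc] at ht
  have := mul_rpow_one_sub_add_mul_rpow_one_add_le hα0 hα1 ht.1.le ht.2
  exact mul_nonneg hα0 (by linarith)

/-- For every `α ∈ [0,1]` and `y ∈ (0,1]`:
`(1 − y/2)(1 − y)^α + (1 + y/2)(1 + y)^α − 2 ≤ α² y²` (real powers). -/
theorem stmt4 (α : ℝ) (hα : α ∈ Set.Icc (0 : ℝ) 1) (y : ℝ) (hy : y ∈ Set.Ioc (0 : ℝ) 1) :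
    (1 - y / 2) * (1 - y) ^ α + (1 + y / 2) * (1 + y) ^ α - 2 ≤ α ^ 2 * y ^ 2 := by
  have htangent := (convexOn_gap hα.1 hα.2).add_mul_sub_le_of_hasDerivAt
    (left_mem_Icc.2 zero_le_one) (Ioc_subset_Icc_self hy)
    (hasDerivAt_gap α (by norm_num : (0 : ℝ) ∈ Ioo (-1) 1))
  norm_num [gap, gapDeriv] at htangent
  linarith
end
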